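/- For any nonnegative integer m and any x in (-1,1), the normalized associated Legendre functions satisfy the three-term recurrence x² P̄^m_l(x) = c_{l-2} P̄^m_{l-2}(x) + d_l P̄^m_l(x) + c_l P̄^m_{l+2}(x) for all l ≥ m+2, where c_l = sqrt((l-m+1)(l-m+2)(l+m+1)(l+m+2) / ((2l+1)(2l+3)²(2l+5))) and d_l = (2l(l+1) - 2m² - 1) / ((2l-1)(2l+3)). -/

import Mathlib

open scoped Nat

/-- The Legendre polynomial of degree `l`, via Rodrigues' formula. -/
noncomputable def legendreP (l : ℕ) : ℝ → ℝ := fun x =>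
  (1 / (2 ^ l * (l ! : ℝ))) * iteratedDeriv l (fun y : ℝ => (y ^ 2 - 1) ^ l) x

/-- The normalized associated Legendre function `P̄_l^m`. -/
noncomputable def nalf (m l : ℕ) : ℝ → ℝ := fun x =>
  Real.sqrt ((2 * l + 1) / 2 * ((l - m)! : ℝ) / ((l + m)! : ℝ)) *
    (1 - x ^ 2) ^ ((m : ℝ) / 2) * iteratedDeriv m (legendreP l) x

/-- The spectral (l²-operator) norm of a real matrix. -/
noncomputable def specNorm {α β : Type*} [Fintype α] [Fintype β] [DecidableEq α] [DecidableEq β]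
    (A : Matrix α β ℝ) : ℝ :=
  ‖LinearMap.toContinuousLinearMap (Matrix.toEuclideanLin A)‖

/-- The singular values of a real matrix, listed in decreasing order. -/
noncomputable def singularValues {p q : ℕ} (A : Matrix (Fin p) (Fin q) ℝ) : List ℝ :=
  List.insertionSort (· ≥ ·)
    (List.ofFn fun i => Real.sqrt ((by simpa using Matrix.isHermitian_conjTranspose_mul_self A : (Matrix.transpose A * A).IsHermitian).eigenvalues i))

noncomputable def ccoef (m l : ℕ) : ℝ :=
  Real.sqrt ((((l : ℝ) - m + 1) * ((l : ℝ) - m + 2) * ((l : ℝ) + m + 1) * ((l : ℝ) + m + 2)) /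
    ((2 * (l : ℝ) + 1) * (2 * (l : ℝ) + 3) ^ 2 * (2 * (l : ℝ) + 5)))

noncomputable def dcoef (m l : ℕ) : ℝ :=
  (2 * (l : ℝ) * ((l : ℝ) + 1) - 2 * (m : ℝ) ^ 2 - 1) /
    ((2 * (l : ℝ) - 1) * (2 * (l : ℝ) + 3))

/-! Rodrigues' formula makes `P_l` a polynomial, and Leibniz's rule applied to
`(X² - 1)^(l+1) = (X² - 1) (X² - 1)^l` yields Bonnet's recurrence and
`P'_{l+2} = P'_l + (2l+3) P_{l+1}`. Differentiating both `m` times gives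
`(l+2-m) P_{l+2}^{(m)} = (2l+3) x P_{l+1}^{(m)} - (l+1+m) P_l^{(m)}`, which after normalization is
the symmetric recurrence `x P̄_{l+1} = a_l P̄_l + a_{l+1} P̄_{l+2}`: multiplication by `x` is a
symmetric tridiagonal (Jacobi) operator in the basis `P̄_l`. Applying it twice gives the
recurrence for `x²`, with `c_l = a_l a_{l+1}` and `d_{l+1} = a_l² + a_{l+1}²`. -/

open Polynomial

namespace Polynomial

theorem iterate_derivative_X_mul {R : Type*} [CommSemiring R] (n : ℕ) (p : R[X]) :
    derivative^[n] (X * p) = X * derivative^[n] p + (n : R[X]) * derivative^[n - 1] p := by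
  rw [mul_comm, iterate_derivative_mul_X, nsmul_eq_mul, mul_comm]

theorem derivative_X_sq_sub_one_pow_succ {R : Type*} [CommRing R] (l : ℕ) :
    derivative ((X ^ 2 - 1 : R[X]) ^ (l + 1)) =
      ((2 * (l + 1) : ℕ) : R[X]) * (X * (X ^ 2 - 1) ^ l) := by
  rw [derivative_pow_succ, derivative_sub, derivative_X_sq, derivative_one, map_ofNat,
    ← Nat.cast_succ, C_eq_natCast]
  push_cast
  ring

theorem iteratedDeriv_eval {𝕜 : Type*} [NontriviallyNormedField 𝕜] (p : 𝕜[X]) (n : ℕ) :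
    iteratedDeriv n (fun x => p.eval x) = fun x => (derivative^[n] p).eval x := by
  induction n with
  | zero => simp
  | succ n ih =>
    rw [iteratedDeriv_succ, ih]
    ext x
    rw [Function.iterate_succ_apply']
    exact Polynomial.deriv _

end Polynomial

section LegendrePoly

variable (K : Type*) [Field K]

noncomputable def legendrePoly (l : ℕ) : K[X] :=
  C ((2 ^ l * l ! : K)⁻¹) * derivative^[l] ((X ^ 2 - 1) ^ l)

variable {K} [CharZero K]

theorem C_inv_two_pow_mul_factorial_succ (l : ℕ) :
    C ((2 ^ (l + 1) * (l + 1)! : K)⁻¹) * ((2 * (l + 1) : ℕ) : K[X]) =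
      C ((2 ^ l * l ! : K)⁻¹) := by
  rw [← C_eq_natCast, ← C_mul]
  congr 1
  push_cast [Nat.factorial_succ]
  field_simp
  ring

theorem derivative_legendrePoly_succ (l : ℕ) :
    derivative (legendrePoly K (l + 1)) =
      X * derivative (legendrePoly K l) + ((l : K[X]) + 1) * legendrePoly K l := by
  simp only [legendrePoly, derivative_C_mul, ← Function.iterate_succ_apply' derivative]
  rw [Function.iterate_succ_apply, derivative_X_sq_sub_one_pow_succ,
    ← C_inv_two_pow_mul_factorial_succ l, iterate_derivative_natCast_mul,
    iterate_derivative_X_mul, Nat.add_sub_cancel]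
  push_cast
  ring

theorem X_sq_sub_one_mul_derivative_legendrePoly (l : ℕ) :
    (X ^ 2 - 1) * derivative (legendrePoly K l) =
      ((l : K[X]) + 1) * (legendrePoly K (l + 1) - X * legendrePoly K l) := by
  simp only [legendrePoly, derivative_C_mul, ← Function.iterate_succ_apply' derivative,
    Nat.succ_eq_add_one]
  set u : K[X] := (X ^ 2 - 1) ^ l
  -- two Leibniz expansions of `D^(l+1) (X² - 1)^(l+1)`; comparing them eliminates `D^(l-1) u`
  have h₁ : derivative^[l + 1] ((X ^ 2 - 1) ^ (l + 1)) =
      ((2 * (l + 1) : ℕ) : K[X]) *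
        (X * derivative^[l] u + (l : K[X]) * derivative^[l - 1] u) := by
    rw [Function.iterate_succ_apply, derivative_X_sq_sub_one_pow_succ,
      iterate_derivative_natCast_mul, iterate_derivative_X_mul]
  have h₂ : derivative^[l + 1] ((X ^ 2 - 1) ^ (l + 1)) =
      (X ^ 2 - 1) * derivative^[l + 1] u + ((2 * (l + 1) : ℕ) : K[X]) * (X * derivative^[l] u)
        + ((l : K[X]) + 1) * (l : K[X]) * derivative^[l - 1] u := by
    rw [show (X ^ 2 - 1 : K[X]) ^ (l + 1) = X * (X * u) - u by ring, iterate_derivative_sub,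
      iterate_derivative_X_mul, iterate_derivative_X_mul, iterate_derivative_X_mul,
      Nat.add_sub_cancel]
    push_cast
    ring
  have hc := C_inv_two_pow_mul_factorial_succ (K := K) l
  push_cast at h₁ h₂ hc ⊢
  linear_combination
    (-((X ^ 2 - 1) * derivative^[l + 1] u + ((l : K[X]) + 1) * X * derivative^[l] u)) * hc
    - ((l : K[X]) + 1) * C ((2 ^ (l + 1) * (l + 1)! : K)⁻¹) * h₁
    - 2 * ((l : K[X]) + 1) * C ((2 ^ (l + 1) * (l + 1)! : K)⁻¹) * (h₂ - h₁)

theorem legendrePoly_add_two (l : ℕ) :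
    ((l : K[X]) + 2) * legendrePoly K (l + 2) =
      (2 * (l : K[X]) + 3) * (X * legendrePoly K (l + 1)) -
        ((l : K[X]) + 1) * legendrePoly K l := by
  have h₁ := X_sq_sub_one_mul_derivative_legendrePoly (K := K) (l + 1)
  have h₂ := derivative_legendrePoly_succ (K := K) l
  have h₃ := X_sq_sub_one_mul_derivative_legendrePoly (K := K) l
  push_cast at h₁
  linear_combination (-1 : K[X]) * h₁ + (X ^ 2 - 1) * h₂ + X * h₃

theorem derivative_legendrePoly_add_two (l : ℕ) :
    derivative (legendrePoly K (l + 2)) =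
      derivative (legendrePoly K l) + (2 * (l : K[X]) + 3) * legendrePoly K (l + 1) := by
  have h₁ := derivative_legendrePoly_succ (K := K) (l + 1)
  have h₂ := derivative_legendrePoly_succ (K := K) l
  have h₃ := X_sq_sub_one_mul_derivative_legendrePoly (K := K) l
  push_cast at h₁
  linear_combination h₁ + X * h₂ + h₃

theorem iterate_derivative_legendrePoly_add_two (m l : ℕ) :
    ((l : K[X]) + 2 - (m : K[X])) * derivative^[m] (legendrePoly K (l + 2)) =
      (2 * (l : K[X]) + 3) * (X * derivative^[m] (legendrePoly K (l + 1)))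
        - ((l : K[X]) + 1 + (m : K[X])) * derivative^[m] (legendrePoly K l) := by
  cases m with
  | zero => simpa using legendrePoly_add_two l
  | succ k =>
    have h₁ : derivative^[k + 1] (((l + 2 : ℕ) : K[X]) * legendrePoly K (l + 2)) =
        derivative^[k + 1] (((2 * l + 3 : ℕ) : K[X]) * (X * legendrePoly K (l + 1))
          - ((l + 1 : ℕ) : K[X]) * legendrePoly K l) := by
      push_cast
      rw [legendrePoly_add_two]
    have h₂ : derivative^[k] (derivative (legendrePoly K (l + 2))) =
        derivative^[k] (derivative (legendrePoly K l)
          + ((2 * l + 3 : ℕ) : K[X]) * legendrePoly K (l + 1)) := by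
      push_cast
      rw [derivative_legendrePoly_add_two]
    simp only [iterate_derivative_sub, iterate_derivative_natCast_mul, iterate_derivative_X_mul,
      Nat.add_sub_cancel] at h₁
    simp only [iterate_map_add, iterate_derivative_natCast_mul,
      ← Function.iterate_succ_apply] at h₂
    push_cast at h₁ h₂ ⊢
    linear_combination h₁ - ((k : K[X]) + 1) * h₂

end LegendrePoly

theorem legendreP_eq_eval (l : ℕ) : legendreP l = fun x => (legendrePoly ℝ l).eval x := by
  have h : (fun y : ℝ => (y ^ 2 - 1) ^ l) = fun y => ((X ^ 2 - 1 : ℝ[X]) ^ l).eval y := by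
    simp
  ext x
  simp [legendreP, legendrePoly, h, iteratedDeriv_eval]
noncomputable def nalfConst (m l : ℕ) : ℝ :=
  √((2 * l + 1) / 2 * ((l - m)! : ℝ) / ((l + m)! : ℝ))

theorem nalf_eq (m l : ℕ) (x : ℝ) :
    nalf m l x = nalfConst m l * (1 - x ^ 2) ^ ((m : ℝ) / 2) *
      (derivative^[m] (legendrePoly ℝ l)).eval x := by
  rw [nalf, nalfConst, legendreP_eq_eval, iteratedDeriv_eval]

theorem nalfConst_nonneg (m l : ℕ) : 0 ≤ nalfConst m l := Real.sqrt_nonneg _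

theorem sq_nalfConst (m l : ℕ) :
    nalfConst m l ^ 2 = (2 * l + 1) / 2 * ((l - m)! : ℝ) / ((l + m)! : ℝ) :=
  Real.sq_sqrt (by positivity)

noncomputable def acoef (m l : ℕ) : ℝ :=
  √(((l : ℝ) - m + 1) * (l + m + 1) / ((2 * l + 1) * (2 * l + 3)))

theorem acoef_nonneg (m l : ℕ) : 0 ≤ acoef m l := Real.sqrt_nonneg _

theorem sq_acoef {m l : ℕ} (h : m ≤ l + 1) :
    acoef m l ^ 2 = ((l : ℝ) - m + 1) * (l + m + 1) / ((2 * l + 1) * (2 * l + 3)) := by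
  have : (m : ℝ) ≤ l + 1 := by exact_mod_cast h
  exact Real.sq_sqrt (div_nonneg (mul_nonneg (by linarith) (by positivity)) (by positivity))

theorem sq_nalfConst_succ {m l : ℕ} (h : m ≤ l) :
    (2 * l + 1) * (l + 1 + m) * nalfConst m (l + 1) ^ 2 =
      (2 * l + 3) * (l + 1 - m) * nalfConst m l ^ 2 := by
  rw [sq_nalfConst, sq_nalfConst]
  obtain ⟨k, rfl⟩ := Nat.exists_eq_add_of_le h
  rw [show m + k + 1 - m = k + 1 by omega, show m + k - m = k by omega,
    show m + k + 1 + m = m + k + m + 1 by omega, Nat.factorial_succ, Nat.factorial_succ]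
  push_cast
  field_simp
  ring

theorem acoef_mul_nalfConst_succ {m l : ℕ} (h : m ≤ l) :
    (2 * l + 1) * (acoef m l * nalfConst m (l + 1)) = (l + 1 - m) * nalfConst m l := by
  have hm : (m : ℝ) ≤ l := by exact_mod_cast h
  rw [← sq_eq_sq₀ (mul_nonneg (by positivity) (mul_nonneg (acoef_nonneg m l)
    (nalfConst_nonneg m (l + 1)))) (mul_nonneg (by linarith) (nalfConst_nonneg m l)),
    mul_pow, mul_pow, mul_pow, sq_acoef (by omega)]
  field_simp
  linear_combination (l + 1 - m : ℝ) * sq_nalfConst_succ h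

theorem acoef_mul_nalfConst {m l : ℕ} (h : m ≤ l) :
    (2 * l + 3) * (acoef m l * nalfConst m l) = (l + 1 + m) * nalfConst m (l + 1) := by
  rw [← sq_eq_sq₀ (mul_nonneg (by positivity) (mul_nonneg (acoef_nonneg m l)
    (nalfConst_nonneg m l))) (mul_nonneg (by positivity) (nalfConst_nonneg m (l + 1))),
    mul_pow, mul_pow, mul_pow, sq_acoef (by omega)]
  field_simp
  linear_combination -(l + 1 + m : ℝ) * sq_nalfConst_succ h

theorem acoef_mul_acoef_succ {m l : ℕ} (h : m ≤ l + 1) :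
    acoef m l * acoef m (l + 1) = ccoef m l := by
  rw [ccoef, ← Real.sqrt_sq (mul_nonneg (acoef_nonneg m l) (acoef_nonneg m (l + 1)))]
  congr 1
  rw [mul_pow, sq_acoef (by omega), sq_acoef (by omega)]
  push_cast
  field_simp
  ring

theorem sq_acoef_add_sq_acoef_succ {m l : ℕ} (h : m ≤ l + 1) :
    acoef m l ^ 2 + acoef m (l + 1) ^ 2 = dcoef m (l + 1) := by
  rw [dcoef, sq_acoef (by omega), sq_acoef (by omega)]
  push_cast
  rw [show 2 * ((l : ℝ) + 1) - 1 = 2 * l + 1 by ring,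
    show 2 * ((l : ℝ) + 1) + 3 = 2 * l + 5 by ring]
  field_simp
  ring

theorem mul_nalf_succ {m l : ℕ} (h : m ≤ l) (x : ℝ) :
    x * nalf m (l + 1) x = acoef m l * nalf m l x + acoef m (l + 1) * nalf m (l + 2) x := by
  have hrec := congrArg (eval x) (iterate_derivative_legendrePoly_add_two (K := ℝ) m l)
  simp only [eval_mul, eval_sub, eval_add, eval_X, eval_natCast, eval_ofNat, eval_one] at hrec
  have h₁ : (2 * (l : ℝ) + 3) * (acoef m (l + 1) * nalfConst m (l + 2)) =
      (l + 2 - m) * nalfConst m (l + 1) := by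
    have := acoef_mul_nalfConst_succ (show m ≤ l + 1 by omega)
    push_cast at this
    linear_combination this
  have h₂ := acoef_mul_nalfConst h
  refine mul_left_cancel₀ (show (2 * l + 3 : ℝ) ≠ 0 by positivity) ?_
  simp only [nalf_eq]
  linear_combination (-(1 - x ^ 2) ^ ((m : ℝ) / 2) * nalfConst m (l + 1)) * hrec
    - ((1 - x ^ 2) ^ ((m : ℝ) / 2) * (derivative^[m] (legendrePoly ℝ (l + 2))).eval x) * h₁
    - ((1 - x ^ 2) ^ ((m : ℝ) / 2) * (derivative^[m] (legendrePoly ℝ l)).eval x) * h₂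

theorem three_term_recurrence_general (m : ℕ) (x : ℝ)
    (l : ℕ) (hl : m + 2 ≤ l) :
    x ^ 2 * nalf m l x
      = ccoef m (l - 2) * nalf m (l - 2) x + dcoef m l * nalf m l x
        + ccoef m l * nalf m (l + 2) x := by
  obtain ⟨n, rfl⟩ : ∃ n, l = n + 2 := ⟨l - 2, by omega⟩
  have h₀ := mul_nalf_succ (show m ≤ n by omega) x
  have h₁ := mul_nalf_succ (show m ≤ n + 1 by omega) x
  have h₂ := mul_nalf_succ (show m ≤ n + 2 by omega) x
  rw [Nat.add_sub_cancel, ← acoef_mul_acoef_succ (show m ≤ n + 1 by omega),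
    ← acoef_mul_acoef_succ (show m ≤ n + 3 by omega),
    ← sq_acoef_add_sq_acoef_succ (show m ≤ n + 2 by omega)]
  linear_combination x * h₁ + acoef m (n + 1) * h₀ + acoef m (n + 2) * h₂

theorem three_term_recurrence (m : ℕ) (x : ℝ) (hx : x ∈ Set.Ioo (-1 : ℝ) 1)
    (l : ℕ) (hl : m + 2 ≤ l) :
    x ^ 2 * nalf m l x
      = ccoef m (l - 2) * nalf m (l - 2) x + dcoef m l * nalf m l x
        + ccoef m l * nalf m (l + 2) x :=
  three_term_recurrence_general m x l hl
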